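/- The orthogonal complement of the subspace 𝒲 in the space of 6×6 real symmetric matrices (with inner product ⟨A,B⟩ = tr(AB)) consists exactly of the symmetric matrices (a_{ij}) satisfying a_{14}=a_{22}, a_{15}=a_{23}, a_{16}=a_{33}, a_{25}=a_{34}, a_{26}=a_{35}, a_{46}=a_{55}. -/
import Mathlib


open Matrix

/-- The general element of the subspace 𝒲 of 6×6 real symmetric matrices. -/
def Wmat (w : Fin 6 → ℝ) : Matrix (Fin 6) (Fin 6) ℝ :=
  !![0, 0, 0, w 0, w 1, w 2;
     0, -2 * w 0, -w 1, 0, w 3, w 4;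
     0, -w 1, -2 * w 2, -w 3, -w 4, 0;
     w 0, 0, -w 3, 0, 0, w 5;
     w 1, w 3, -w 4, 0, -2 * w 5, 0;
     w 2, w 4, 0, w 5, 0, 0]

lemma cons_val_five' (x : ℝ) (u : Fin 5 → ℝ) : Matrix.vecCons x u 5 = u 4 := rfl
lemma cons_val_four' (x : ℝ) (u : Fin 4 → ℝ) : Matrix.vecCons x u 4 = u 3 := rfl
lemma cons_val_three' (x : ℝ) (u : Fin 3 → ℝ) : Matrix.vecCons x u 3 = u 2 := rfl
lemma cons_val_two' (x : ℝ) (u : Fin 2 → ℝ) : Matrix.vecCons x u 2 = u 1 := rfl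
lemma cons_val_one' (x : ℝ) (u : Fin 1 → ℝ) : Matrix.vecCons x u 1 = u 0 := rfl

/-- The orthogonal complement of 𝒲 in the space of 6×6 real symmetric
matrices, with the trace inner product, consists exactly of the symmetric
matrices satisfying `a₁₄ = a₂₂`, `a₁₅ = a₂₃`, `a₁₆ = a₃₃`, `a₂₅ = a₃₄`,
`a₂₆ = a₃₅`, `a₄₆ = a₅₅` (1-based indexing). -/
theorem orthogonal_complement_of_W (A : Matrix (Fin 6) (Fin 6) ℝ)
    (hAsymm : A.IsSymm) :
    (∀ w : Fin 6 → ℝ, Matrix.trace (A * Wmat w) = 0) ↔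
      (A 0 3 = A 1 1 ∧ A 0 4 = A 1 2 ∧ A 0 5 = A 2 2 ∧
        A 1 4 = A 2 3 ∧ A 1 5 = A 2 4 ∧ A 3 5 = A 4 4) := by
  have hs : ∀ i j, A j i = A i j := fun i j => hAsymm.apply i j
  have key : ∀ w : Fin 6 → ℝ, Matrix.trace (A * Wmat w) =
      2 * ((A 0 3 - A 1 1) * w 0 + (A 0 4 - A 1 2) * w 1 + (A 0 5 - A 2 2) * w 2 +
        (A 1 4 - A 2 3) * w 3 + (A 1 5 - A 2 4) * w 4 + (A 3 5 - A 4 4) * w 5) := by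
    intro w
    simp [Matrix.trace, Matrix.diag, Matrix.mul_apply, Fin.sum_univ_six, Wmat,
      cons_val_five', cons_val_four', cons_val_three', cons_val_two', cons_val_one',
      hs 0 3, hs 0 4, hs 0 5, hs 1 2, hs 1 4, hs 1 5, hs 2 3, hs 2 4, hs 3 5]
    ring
  constructor
  · intro h
    have h0 := (h ![1,0,0,0,0,0]).symm.trans (key ![1,0,0,0,0,0])
    have h1 := (h ![0,1,0,0,0,0]).symm.trans (key ![0,1,0,0,0,0])
    have h2 := (h ![0,0,1,0,0,0]).symm.trans (key ![0,0,1,0,0,0])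
    have h3 := (h ![0,0,0,1,0,0]).symm.trans (key ![0,0,0,1,0,0])
    have h4 := (h ![0,0,0,0,1,0]).symm.trans (key ![0,0,0,0,1,0])
    have h5 := (h ![0,0,0,0,0,1]).symm.trans (key ![0,0,0,0,0,1])
    simp [cons_val_five', cons_val_four', cons_val_three', cons_val_two',
      cons_val_one'] at h0 h1 h2 h3 h4 h5
    exact ⟨by linarith, by linarith, by linarith, by linarith, by linarith, by linarith⟩
  · rintro ⟨e1, e2, e3, e4, e5, e6⟩ w
    rw [key, e1, e2, e3, e4, e5, e6]
    ring
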